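/- arXiv:1603.03910 — 14 statements merged into one kernel-verified Lean document; each statement's English description precedes it below -/
import Mathlib

section
/- The elements 1, r, r^2, r^3 form a basis of Z/2[r] as a free module over the subring Z/2[G], where G = r^4 + r^3. -/
/-!
Let `g` be monic of degree `n > 0` and `A = R[g] ⊆ R[X]`. Division with remainder by `g`,
`p = (p %ₘ g) + g * (p /ₘ g)`, shows by induction on the degree that `1, X, …, X^(n-1)` span
`R[X]` over `A`. Every element of `A` is some `q(g)`, whose degree is a multiple of `n`, so the
nonzero terms of `∑ cᵢ Xⁱ` (`cᵢ ∈ A`, `i < n`) have pairwise distinct degrees modulo `n` and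
cannot cancel: the powers are linearly independent.
-/

open Polynomial

namespace Polynomial

section CommSemiring

variable {R : Type*} [CommSemiring R] {g : R[X]} {n : ℕ}

theorem exists_comp_eq_of_mem_adjoin_singleton {p : R[X]} (hp : p ∈ Algebra.adjoin R {g}) :
    ∃ q : R[X], q.comp g = p := by
  rw [Algebra.adjoin_singleton_eq_range_aeval] at hp
  exact hp

theorem IsMonicOfDegree.dvd_natDegree_of_mem_adjoin (hg : g.IsMonicOfDegree n) {p : R[X]}
    (hp : p ∈ Algebra.adjoin R {g}) : n ∣ p.natDegree := by
  obtain ⟨q, rfl⟩ := exists_comp_eq_of_mem_adjoin_singleton hp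
  by_cases hq : q = 0
  · simp [hq]
  rw [natDegree_comp_eq_of_mul_ne_zero (by simpa [hg.leadingCoeff_eq] using hq), hg.natDegree_eq]
  exact dvd_mul_left n _

theorem degreeLT_le_span_X_pow_restrictScalars (A : Subalgebra R R[X]) (n : ℕ) :
    degreeLT R n ≤
      (Submodule.span A (Set.range fun i : Fin n => (X : R[X]) ^ (i : ℕ))).restrictScalars R := by
  classical
  rw [degreeLT_eq_span_X_pow]
  refine le_trans (Submodule.span_mono ?_) (Submodule.span_le_restrictScalars R A _)
  intro p hp
  simp only [Finset.coe_image, Finset.coe_range, Set.mem_image, Set.mem_Iio] at hp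
  obtain ⟨i, hi, rfl⟩ := hp
  exact ⟨⟨i, hi⟩, rfl⟩

end CommSemiring

variable {R : Type*} [CommRing R] {g : R[X]} {n : ℕ}

theorem IsMonicOfDegree.span_X_pow_eq_top (hg : g.IsMonicOfDegree n) (hn : n ≠ 0) :
    Submodule.span (Algebra.adjoin R {g}) (Set.range fun i : Fin n => (X : R[X]) ^ (i : ℕ)) =
      ⊤ := by
  nontriviality R
  set M := Submodule.span (Algebra.adjoin R {g}) (Set.range fun i : Fin n => (X : R[X]) ^ (i : ℕ))
  have hlow : ∀ p : R[X], p.degree < n → p ∈ M := fun p hp =>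
    degreeLT_le_span_X_pow_restrictScalars _ n (mem_degreeLT.mpr hp)
  refine eq_top_iff.mpr fun p _ => ?_
  induction hd : p.natDegree using Nat.strong_induction_on generalizing p with
  | _ d ih =>
  by_cases hpn : p.natDegree < n
  · exact hlow p ((degree_le_natDegree).trans_lt (by exact_mod_cast hpn))
  have hquot : (p /ₘ g).natDegree < d := by
    rw [natDegree_divByMonic p hg.monic, hg.natDegree_eq]; omega
  have hmul : g * (p /ₘ g) =
      (⟨g, Algebra.self_mem_adjoin_singleton R g⟩ : Algebra.adjoin R {g}) • (p /ₘ g) := rfl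
  rw [← modByMonic_add_div p g, hmul]
  refine M.add_mem (hlow _ ?_) (M.smul_mem _ (ih _ hquot _ Submodule.mem_top rfl))
  rw [← hg.natDegree_eq, ← degree_eq_natDegree hg.monic.ne_zero]
  exact degree_modByMonic_lt p hg.monic

theorem IsMonicOfDegree.linearIndependent_X_pow (hg : g.IsMonicOfDegree n) :
    LinearIndependent (Algebra.adjoin R {g}) (fun i : Fin n => (X : R[X]) ^ (i : ℕ)) := by
  nontriviality R
  rw [Fintype.linearIndependent_iff]
  intro c hc
  set f : Fin n → R[X] := fun i => (c i : R[X]) * X ^ (i : ℕ) with hf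
  have hdeg : ∀ i, f i ≠ 0 → (f i).degree = ((c i : R[X]).natDegree + i : ℕ) := fun i hi => by
    rw [hf, degree_mul_X_pow, degree_eq_natDegree (left_ne_zero_of_mul hi)]
    norm_cast
  have hdisj : Set.Pairwise {i | i ∈ Finset.univ ∧ f i ≠ 0} (Function.onFun Ne (degree ∘ f)) := by
    rintro i ⟨-, hi⟩ j ⟨-, hj⟩ hij heq
    simp only [Function.comp_apply, hdeg i hi, hdeg j hj, Nat.cast_inj] at heq
    obtain ⟨k, hk⟩ := hg.dvd_natDegree_of_mem_adjoin (c i).2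
    obtain ⟨l, hl⟩ := hg.dvd_natDegree_of_mem_adjoin (c j).2
    rw [hk, hl] at heq
    have := congrArg (· % n) heq
    simp only [Nat.mul_add_mod, Nat.mod_eq_of_lt i.isLt, Nat.mod_eq_of_lt j.isLt] at this
    exact hij (Fin.ext this)
  have hsum : ∑ i, f i = 0 := by simpa only [Subalgebra.smul_def, smul_eq_mul] using hc
  have hbot := degree_sum_eq_of_disjoint f Finset.univ hdisj
  rw [hsum, degree_zero, eq_comm, Finset.sup_eq_bot_iff] at hbot
  intro i
  exact Subtype.ext (mul_X_pow_eq_zero (degree_eq_bot.mp (hbot i (Finset.mem_univ i))))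

noncomputable def IsMonicOfDegree.basisXPow (hg : g.IsMonicOfDegree n) (hn : n ≠ 0) :
    Module.Basis (Fin n) (Algebra.adjoin R {g}) R[X] :=
  .mk hg.linearIndependent_X_pow (hg.span_X_pow_eq_top hn).ge

@[simp]
theorem IsMonicOfDegree.basisXPow_apply (hg : g.IsMonicOfDegree n) (hn : n ≠ 0) (i : Fin n) :
    hg.basisXPow hn i = X ^ (i : ℕ) :=
  Module.Basis.mk_apply _ _ i

end Polynomial

theorem stmt1 :
    ∃ b : Module.Basis (Fin 4)
      (Algebra.adjoin (ZMod 2) {(X ^ 4 + X ^ 3 : Polynomial (ZMod 2))})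
      (Polynomial (ZMod 2)),
      ∀ i : Fin 4, b i = X ^ (i : ℕ) := by
  have hG : (X ^ 4 + X ^ 3 : Polynomial (ZMod 2)).IsMonicOfDegree 4 :=
    (isMonicOfDegree_X_pow _ 4).add_right (by compute_degree!)
  exact ⟨hG.basisXPow four_ne_zero, hG.basisXPow_apply four_ne_zero⟩
end

section
/- Let U : Z/2[r] → Z/2[r] be the unique Z/2-linear map satisfying U(G·f) = F·U(f) for all f, and sending 1, r, r^2, r^3 to 1, r, r^2, r^3 + r^2 + r respectively (where F = r(r+1)^3 and G = r^3(r+1)). Then U(f^2) = (U(f))^2 for all f in Z/2[r]. -/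
/-!
Because `X ^ 4 = X ^ 3 + G` in characteristic 2, the values `u n = U (X ^ n)` satisfy
`u (n + 4) = u (n + 3) + F * u n`. Squaring this recurrence, or applying it twice, shows that
both `n ↦ u n ^ 2` and `n ↦ u (2 * n)` satisfy the same recurrence with `F ^ 2` in place of `F`,
so they coincide once they agree for `n < 4`, which is a direct computation. Finally
`f ↦ U (f ^ 2) = U (expand 2 f)` and `f ↦ U f ^ 2` are both `ZMod 2`-linear (Frobenius), so
agreement on the monomials `X ^ n` gives agreement everywhere.
-/

open Polynomial

namespace LinearRecurrence

variable {R : Type*} [CommRing R]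

def quartic (c : R) : LinearRecurrence R := ⟨4, ![c, 0, 0, 1]⟩

theorem isSolution_quartic_iff {c : R} {u : ℕ → R} :
    (quartic c).IsSolution u ↔ ∀ n, u (n + 4) = u (n + 3) + c * u n := by
  change (∀ n, u (n + 4) = ∑ i : Fin 4, ![c, 0, 0, 1] i * u (n + i)) ↔ _
  simp [Fin.sum_univ_four, add_comm]

theorem eq_of_isSolution_quartic {c : R} {u v : ℕ → R} (hu : (quartic c).IsSolution u)
    (hv : (quartic c).IsSolution v) (h : ∀ n < 4, u n = v n) : u = v :=
  ((quartic c).eq_iff_eqOn_range_order u v hu hv).2 fun n hn => h n (Finset.mem_range.1 hn)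

variable [CharP R 2] {c : R} {u : ℕ → R}

theorem IsSolution.quartic_comp_two_mul (hu : (quartic c).IsSolution u) :
    (quartic (c ^ 2)).IsSolution (fun n => u (2 * n)) := by
  rw [isSolution_quartic_iff] at hu ⊢
  intro n
  have h8 : u (2 * n + 8) = u (2 * n + 7) + c * u (2 * n + 4) := hu (2 * n + 4)
  have h7 : u (2 * n + 7) = u (2 * n + 6) + c * u (2 * n + 3) := hu (2 * n + 3)
  have h4 : u (2 * n + 4) = u (2 * n + 3) + c * u (2 * n) := hu (2 * n)
  rw [show 2 * (n + 4) = 2 * n + 8 by ring, show 2 * (n + 3) = 2 * n + 6 by ring, h8, h7, h4]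
  linear_combination c * u (2 * n + 3) * CharTwo.two_eq_zero (R := R)

theorem IsSolution.quartic_sq (hu : (quartic c).IsSolution u) :
    (quartic (c ^ 2)).IsSolution (fun n => u n ^ 2) := by
  rw [isSolution_quartic_iff] at hu ⊢
  intro n
  rw [hu, CharTwo.add_sq, mul_pow]

end LinearRecurrence

theorem FiniteField.map_pow_card_of_map_X_pow {K S : Type*} [Field K] [Fintype K] [CommRing S]
    [Algebra K S] (U : K[X] →ₗ[K] S)
    (h : ∀ n, U (X ^ (n * Fintype.card K)) = U (X ^ n) ^ Fintype.card K) (f : K[X]) :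
    U (f ^ Fintype.card K) = U f ^ Fintype.card K := by
  have : U ∘ₗ (expand K (Fintype.card K)).toLinearMap
      = (frobeniusAlgHom K S).toLinearMap ∘ₗ U := by
    refine (basisMonomials K).ext fun n => ?_
    simpa [coe_basisMonomials, expand_monomial, ← monomial_one_right_eq_X_pow] using h n
  simpa [expand_card] using LinearMap.congr_fun this f

open LinearRecurrence in
theorem stmt2 (U : Polynomial (ZMod 2) →ₗ[ZMod 2] Polynomial (ZMod 2))
    (hsemi : ∀ f, U (X ^ 3 * (X + 1) * f) = X * (X + 1) ^ 3 * U f)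
    (h0 : U 1 = 1) (h1 : U X = X) (h2 : U (X ^ 2) = X ^ 2)
    (h3 : U (X ^ 3) = X ^ 3 + X ^ 2 + X) :
    ∀ f, U (f ^ 2) = (U f) ^ 2 := by
  have hu : (quartic (X * (X + 1) ^ 3)).IsSolution fun n => U (X ^ n) := by
    refine isSolution_quartic_iff.2 fun n => ?_
    have hX : (X : (ZMod 2)[X]) ^ (n + 4) = X ^ (n + 3) + X ^ 3 * (X + 1) * X ^ n := by
      ring_nf; reduce_mod_char
    rw [hX, map_add, hsemi]
  have hrec : ∀ n, U (X ^ (n + 4)) = U (X ^ (n + 3)) + X * (X + 1) ^ 3 * U (X ^ n) :=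
    isSolution_quartic_iff.1 hu
  have hdouble : ∀ n, U (X ^ (2 * n)) = U (X ^ n) ^ 2 := by
    refine congr_fun (eq_of_isSolution_quartic hu.quartic_comp_two_mul hu.quartic_sq ?_)
    intro n hn
    interval_cases n
    · simp [h0]
    · simp [h1, h2]
    · show U (X ^ 4) = U (X ^ 2) ^ 2
      rw [hrec 0, h3, pow_zero, h0, h2]
      ring_nf; reduce_mod_char
    · show U (X ^ 6) = U (X ^ 3) ^ 2
      rw [hrec 2, hrec 1, hrec 0, h3, pow_zero, h0, pow_one, h1, h2]
      ring_nf; reduce_mod_char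
  intro f
  simpa [ZMod.card] using FiniteField.map_pow_card_of_map_X_pow U (fun n => by
    simpa [ZMod.card, mul_comm] using hdouble n) f
end

section
/- With U as defined, U(r^{n+4}) = U(r^{n+3}) + (r^4 + r^3 + r^2 + r)·U(r^n) for all n ≥ 0. -/
open Polynomial

section CharTwo

variable {R : Type*} [CommRing R] [CharP R 2]

theorem pow_add_four_eq_of_charTwo (x : R) (n : ℕ) :
    x ^ (n + 4) = x ^ (n + 3) + x ^ 3 * (x + 1) * x ^ n := by
  linear_combination (-x ^ (n + 3)) * CharTwo.two_eq_zero (R := R)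

theorem mul_add_one_pow_three_of_charTwo (x : R) :
    x * (x + 1) ^ 3 = x ^ 4 + x ^ 3 + x ^ 2 + x := by
  linear_combination (x ^ 3 + x ^ 2) * CharTwo.two_eq_zero (R := R)

end CharTwo

theorem stmt3_general (U : Polynomial (ZMod 2) →ₗ[ZMod 2] Polynomial (ZMod 2))
    (hsemi : ∀ f, U (X ^ 3 * (X + 1) * f) = X * (X + 1) ^ 3 * U f) :
    ∀ n : ℕ, U (X ^ (n + 4)) = U (X ^ (n + 3)) + (X ^ 4 + X ^ 3 + X ^ 2 + X) * U (X ^ n) := by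
  intro n
  rw [pow_add_four_eq_of_charTwo, map_add, hsemi, mul_add_one_pow_three_of_charTwo]

theorem stmt3 (U : Polynomial (ZMod 2) →ₗ[ZMod 2] Polynomial (ZMod 2))
    (hsemi : ∀ f, U (X ^ 3 * (X + 1) * f) = X * (X + 1) ^ 3 * U f)
    (h0 : U 1 = 1) (h1 : U X = X) (h2 : U (X ^ 2) = X ^ 2)
    (h3 : U (X ^ 3) = X ^ 3 + X ^ 2 + X) :
    ∀ n : ℕ, U (X ^ (n + 4)) = U (X ^ (n + 3)) + (X ^ 4 + X ^ 3 + X ^ 2 + X) * U (X ^ n) :=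
  stmt3_general U hsemi
end

section
/- For every n ≥ 0 there exists a polynomial A_n in Z/2[t] such that U((r^2 + r)·r^{2n}) = (r^2 + r)·A_n(r^2). -/
/-!
In characteristic 2 let `E` be the polynomials in `X ^ 2` and `O = (X ^ 2 + X) • E`. Since
`(X ^ 2 + X) ^ 2 = X ^ 4 + X ^ 2 ∈ E`, the sum `E + O` is a `ℤ/2`-graded subalgebra, in which both
`G = X ^ 3 * (X + 1) = X ^ 2 * (X ^ 2 + X)` and `F = X * (X + 1) ^ 3 = (X ^ 2 + 1) * (X ^ 2 + X)`
are odd. The identities `(X ^ 2 + X) * X ^ (2n + 2) = G * X ^ (2n)` and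
`X ^ (2n + 6) = G * (X ^ 2 + X) * X ^ (2n) + X ^ (2n + 4)` together with `U (G * f) = F * U f`
then propagate "`U` maps `X ^ (2n)` into `E` and `(X ^ 2 + X) * X ^ (2n)` into `O`" from
`n ≤ 2`, where it follows from the given values of `U` (which force `U (X ^ 4) = X ^ 4`).
-/

open Polynomial

namespace Polynomial

variable {R : Type*} [CommRing R]

variable (R) in
noncomputable def evenPolys : Subalgebra R R[X] := (expand R 2).range

variable (R) in
noncomputable def twistedEvenPolys : Submodule R R[X] :=
  (evenPolys R).toSubmodule.map (LinearMap.mulLeft R (X ^ 2 + X))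

theorem mem_twistedEvenPolys {f : R[X]} :
    f ∈ twistedEvenPolys R ↔ ∃ e ∈ evenPolys R, (X ^ 2 + X) * e = f := by
  simp [twistedEvenPolys]

theorem X_pow_two_mul_mem_evenPolys (n : ℕ) : (X : R[X]) ^ (2 * n) ∈ evenPolys R :=
  (AlgHom.mem_range _).2 ⟨X ^ n, by rw [map_pow, expand_X, pow_mul]⟩

theorem X_sq_add_X_mem_twistedEvenPolys : (X : R[X]) ^ 2 + X ∈ twistedEvenPolys R :=
  mem_twistedEvenPolys.2 ⟨1, one_mem _, mul_one _⟩

theorem mul_mem_twistedEvenPolys {e f : R[X]} (he : e ∈ evenPolys R)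
    (hf : f ∈ twistedEvenPolys R) : e * f ∈ twistedEvenPolys R := by
  obtain ⟨e', he', rfl⟩ := mem_twistedEvenPolys.1 hf
  exact mem_twistedEvenPolys.2 ⟨e * e', mul_mem he he', by ring⟩

section CharTwo

variable [CharP R 2]

theorem X_sq_add_X_sq_mem_evenPolys : ((X : R[X]) ^ 2 + X) ^ 2 ∈ evenPolys R :=
  (AlgHom.mem_range _).2 ⟨X ^ 2 + X, by simp [CharTwo.add_sq, ← pow_mul]⟩

theorem mul_mem_evenPolys_of_mem_twistedEvenPolys {f g : R[X]}
    (hf : f ∈ twistedEvenPolys R) (hg : g ∈ twistedEvenPolys R) : f * g ∈ evenPolys R := by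
  obtain ⟨e, he, rfl⟩ := mem_twistedEvenPolys.1 hf
  obtain ⟨e', he', rfl⟩ := mem_twistedEvenPolys.1 hg
  have hsq : (X ^ 2 + X) * e * ((X ^ 2 + X) * e') = (X ^ 2 + X) ^ 2 * (e * e') := by ring
  rw [hsq]
  exact mul_mem X_sq_add_X_sq_mem_evenPolys (mul_mem he he')

theorem X_mul_X_add_one_pow_three_mem_twistedEvenPolys :
    (X : R[X]) * (X + 1) ^ 3 ∈ twistedEvenPolys R := by
  have hF : (X : R[X]) * (X + 1) ^ 3 = (X ^ 2 + 1) * (X ^ 2 + X) := by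
    linear_combination (X ^ 3 + X ^ 2) * (CharTwo.two_eq_zero : (2 : R[X]) = 0)
  rw [hF]
  exact mul_mem_twistedEvenPolys (add_mem (X_pow_two_mul_mem_evenPolys 1) (one_mem _))
    X_sq_add_X_mem_twistedEvenPolys

end CharTwo

section Semiconjugate

variable {U : R[X] →ₗ[R] R[X]} {F : R[X]} (hF : F ∈ twistedEvenPolys R)
  (hsemi : ∀ f, U (X ^ 3 * (X + 1) * f) = F * U f)
include hF hsemi

theorem map_X_sq_add_X_mul_X_pow_succ_mem {n : ℕ} (hn : U (X ^ (2 * n)) ∈ evenPolys R) :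
    U ((X ^ 2 + X) * X ^ (2 * (n + 1))) ∈ twistedEvenPolys R := by
  have hG : ((X : R[X]) ^ 2 + X) * X ^ (2 * (n + 1)) = X ^ 3 * (X + 1) * X ^ (2 * n) := by ring
  rw [hG, hsemi, mul_comm]
  exact mul_mem_twistedEvenPolys hn hF

theorem map_X_pow_add_three_mem [CharP R 2] {n : ℕ}
    (hO : U ((X ^ 2 + X) * X ^ (2 * n)) ∈ twistedEvenPolys R)
    (hE : U (X ^ (2 * (n + 2))) ∈ evenPolys R) :
    U (X ^ (2 * (n + 3))) ∈ evenPolys R := by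
  have hG : (X : R[X]) ^ (2 * (n + 3)) =
      X ^ 3 * (X + 1) * ((X ^ 2 + X) * X ^ (2 * n)) + X ^ (2 * (n + 2)) := by
    linear_combination (-(X : R[X]) ^ (2 * n + 4) * (X + 1)) *
      (CharTwo.two_eq_zero : (2 : R[X]) = 0)
  rw [hG, map_add, hsemi]
  exact add_mem (mul_mem_evenPolys_of_mem_twistedEvenPolys hF hO) hE

theorem map_X_sq_add_X_mul_X_pow_mem [CharP R 2]
    (h0 : U 1 ∈ evenPolys R) (h2 : U (X ^ 2) ∈ evenPolys R) (h4 : U (X ^ 4) ∈ evenPolys R)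
    (hX : U (X ^ 2 + X) ∈ twistedEvenPolys R) (n : ℕ) :
    U ((X ^ 2 + X) * X ^ (2 * n)) ∈ twistedEvenPolys R := by
  suffices ∀ n, U (X ^ (2 * n)) ∈ evenPolys R ∧ U (X ^ (2 * (n + 1))) ∈ evenPolys R ∧
      U (X ^ (2 * (n + 2))) ∈ evenPolys R ∧ U ((X ^ 2 + X) * X ^ (2 * n)) ∈ twistedEvenPolys R from
    (this n).2.2.2
  intro n
  induction n with
  | zero => exact ⟨by simpa using h0, by simpa using h2, by simpa using h4, by simpa using hX⟩
  | succ n ih =>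
    obtain ⟨hE₀, hE₁, hE₂, hO⟩ := ih
    exact ⟨hE₁, hE₂, map_X_pow_add_three_mem hF hsemi hO hE₂,
      map_X_sq_add_X_mul_X_pow_succ_mem hF hsemi hE₀⟩

end Semiconjugate

end Polynomial

theorem stmt4 (U : Polynomial (ZMod 2) →ₗ[ZMod 2] Polynomial (ZMod 2))
    (hsemi : ∀ f, U (X ^ 3 * (X + 1) * f) = X * (X + 1) ^ 3 * U f)
    (h0 : U 1 = 1) (h1 : U X = X) (h2 : U (X ^ 2) = X ^ 2)
    (h3 : U (X ^ 3) = X ^ 3 + X ^ 2 + X) :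
    ∀ n : ℕ, ∃ A : Polynomial (ZMod 2),
      U ((X ^ 2 + X) * X ^ (2 * n)) = (X ^ 2 + X) * A.comp (X ^ 2) := by
  have h4 : U (X ^ 4) = X ^ 4 := by
    have h := hsemi 1
    rw [mul_one, h0, mul_one, show (X : (ZMod 2)[X]) ^ 3 * (X + 1) = X ^ 4 + X ^ 3 by ring,
      map_add, h3] at h
    linear_combination h + (X ^ 3 + X ^ 2) * (CharTwo.two_eq_zero : (2 : (ZMod 2)[X]) = 0)
  intro n
  have hO := map_X_sq_add_X_mul_X_pow_mem X_mul_X_add_one_pow_three_mem_twistedEvenPolys hsemi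
    (by rw [h0]; exact one_mem _) (by rw [h2]; exact X_pow_two_mul_mem_evenPolys 1)
    (by rw [h4]; exact X_pow_two_mul_mem_evenPolys 2)
    (by rw [map_add, h2, h1]; exact X_sq_add_X_mem_twistedEvenPolys) n
  obtain ⟨_, ⟨A, rfl⟩, hA⟩ := mem_twistedEvenPolys.1 hO
  exact ⟨A, hA.symm⟩
end

section
/- The polynomials A_n in Z/2[t] defined by U((r^2+r)·r^{2n}) = (r^2+r)·A_n(r^2) satisfy the recurrence A_{n+4} = A_{n+3} + (t^4 + t^3 + t^2 + t)·A_n, with A_0 = 1, A_1 = t+1, A_2 = t^2 + t, A_3 = t^3 + t^2. -/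
/-!
Over `𝔽₂` composing with `X ^ 2` is squaring, so the defining relation reads
`U ((X ^ 2 + X) * X ^ (2 * n)) = (X ^ 2 + X) * A n ^ 2`, and `A n` is recovered from it because
squaring is injective. In characteristic two `(X ^ 3 * (X + 1)) ^ 2 * X ^ (2 * n) = X ^ (2 * n + 8) +
X ^ (2 * n + 6)`, so applying the semilinearity of `U` twice gives
`U (g * X ^ (2 * (n + 4))) = F ^ 2 * U (g * X ^ (2 * n)) + U (g * X ^ (2 * (n + 3)))` with
`g = X ^ 2 + X`, and `F = X * (X + 1) ^ 3 = X ^ 4 + X ^ 3 + X ^ 2 + X` yields the recurrence.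
The initial values come from `U (X ^ 3 * (X + 1) * X ^ (2 * k)) = F * U (X ^ (2 * k))` for `k ≤ 2`.
-/

open Polynomial

theorem ZMod.comp_X_pow_self {p : ℕ} [Fact p.Prime] (f : (ZMod p)[X]) :
    f.comp (X ^ p) = f ^ p := by
  rw [← expand_eq_comp_X_pow, ZMod.expand_card]

theorem eq_of_mul_pow_char_eq_mul_pow_char {R : Type*} [CommRing R] [IsDomain R] {p : ℕ}
    [ExpChar R p] {a x y : R} (ha : a ≠ 0) (h : a * x ^ p = a * y ^ p) : x = y :=
  frobenius_inj R p (mul_left_cancel₀ ha h)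

theorem X_sq_add_X_ne_zero {R : Type*} [Semiring R] [Nontrivial R] : (X ^ 2 + X : R[X]) ≠ 0 := by
  intro h
  simpa [coeff_X] using congrArg (coeff · 2) h

namespace CharTwo

variable {R : Type*} [CommRing R] [CharP R 2]

theorem mul_add_one_pow_three (x : R) : x * (x + 1) ^ 3 = x ^ 4 + x ^ 3 + x ^ 2 + x := by
  linear_combination (x ^ 2 + x) * add_sq x 1

theorem mul_pow_add_eight (x : R) (n : ℕ) :
    (x ^ 2 + x) * x ^ (2 * (n + 4)) =
      x ^ 3 * (x + 1) * (x ^ 3 * (x + 1) * ((x ^ 2 + x) * x ^ (2 * n))) +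
        (x ^ 2 + x) * x ^ (2 * (n + 3)) := by
  linear_combination (-(x ^ 2 + x) * x ^ (2 * n) * (x ^ 7 + x ^ 6)) * two_eq_zero (R := R)

end CharTwo

theorem stmt5 (U : Polynomial (ZMod 2) →ₗ[ZMod 2] Polynomial (ZMod 2))
    (hsemi : ∀ f, U (X ^ 3 * (X + 1) * f) = X * (X + 1) ^ 3 * U f)
    (h0 : U 1 = 1) (h1 : U X = X) (h2 : U (X ^ 2) = X ^ 2)
    (h3 : U (X ^ 3) = X ^ 3 + X ^ 2 + X)
    (A : ℕ → Polynomial (ZMod 2))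
    (hA : ∀ n, U ((X ^ 2 + X) * X ^ (2 * n)) = (X ^ 2 + X) * (A n).comp (X ^ 2)) :
    (∀ n, A (n + 4) = A (n + 3) + (X ^ 4 + X ^ 3 + X ^ 2 + X) * A n) ∧
    A 0 = 1 ∧ A 1 = X + 1 ∧ A 2 = X ^ 2 + X ∧ A 3 = X ^ 3 + X ^ 2 := by
  have hsq (n : ℕ) : U ((X ^ 2 + X) * X ^ (2 * n)) = (X ^ 2 + X) * A n ^ 2 := by
    rw [hA, ZMod.comp_X_pow_self]
  have hA_eq (n : ℕ) (P : (ZMod 2)[X]) (h : U ((X ^ 2 + X) * X ^ (2 * n)) = (X ^ 2 + X) * P ^ 2) :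
      A n = P :=
    eq_of_mul_pow_char_eq_mul_pow_char X_sq_add_X_ne_zero ((hsq n).symm.trans h)
  have hshift (k : ℕ) :
      U ((X ^ 2 + X) * X ^ (2 * (k + 1))) = X * (X + 1) ^ 3 * U (X ^ (2 * k)) := by
    rw [← hsemi]
    congr 1
    ring
  have h4 : U (X ^ 4) = X ^ 4 := by
    have h := hsemi 1
    rw [mul_one, h0, mul_one, CharTwo.mul_add_one_pow_three,
      show (X : (ZMod 2)[X]) ^ 3 * (X + 1) = X ^ 4 + X ^ 3 by ring, map_add, h3] at h
    linear_combination h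
  refine ⟨fun n => hA_eq _ _ ?_, hA_eq 0 _ ?_, hA_eq 1 _ ((hshift 0).trans ?_),
    hA_eq 2 _ ((hshift 1).trans ?_), hA_eq 3 _ ((hshift 2).trans ?_)⟩
  · rw [CharTwo.mul_pow_add_eight, map_add, hsemi, hsemi, hsq, hsq, add_comm (A _),
      CharTwo.add_sq, ← CharTwo.mul_add_one_pow_three]
    ring
  · rw [mul_zero, pow_zero, mul_one, map_add, h1, h2]
    ring
  · rw [mul_zero, pow_zero, h0]
    ring
  · rw [mul_one, h2]
    ring
  · rw [show 2 * 2 = 4 from rfl, h4]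
    ring
end

section
/- Define C_n in Z/2[t] by C_0 = 0, C_1 = 1, C_2 = t, C_3 = t^2, and C_{n+4} = C_{n+3} + (t^4 + t^3 + t^2 + t)·C_n + t^n·(t^2 + t). Then (U + I)((r^2+r)·r^{2n}) = (r^2+r)·C_n(r^2) for all n ≥ 0. -/
/-!
Write `V f = U f + f` and `a n = (r² + r) r^{2n}`. In characteristic 2 one has
`r(r+1)³ + r³(r+1) = r² + r`, so the semilinearity of `U` becomes
`V(G f) = F V(f) + (r² + r) f`. Since `G² = r⁸ + r⁶`, also `a (n+4) = G² a n + a (n+3)`, and applying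
`V` twice gives `V(a (n+4)) = V(a (n+3)) + F² V(a n) + (r² + r)² a n`. This is the recurrence of the
`C n` after substituting `r²` (note `F² = r⁸ + r⁶ + r⁴ + r²`), and the first four values agree.
-/

open Polynomial

theorem eq_of_four_step_recurrence {α : Type*} {s t : ℕ → α} (step : ℕ → α → α → α)
    (hs : ∀ n, s (n + 4) = step n (s n) (s (n + 3)))
    (ht : ∀ n, t (n + 4) = step n (t n) (t (n + 3)))
    (h0 : s 0 = t 0) (h1 : s 1 = t 1) (h2 : s 2 = t 2) (h3 : s 3 = t 3) : s = t := by
  funext n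
  induction n using Nat.strong_induction_on with
  | _ n ih =>
    match n with
    | 0 => exact h0
    | 1 => exact h1
    | 2 => exact h2
    | 3 => exact h3
    | m + 4 => rw [hs, ht, ih m (by omega), ih (m + 3) (by omega)]

section CharTwo

variable {R : Type*} [CommRing R] [CharP R 2]

theorem add_self_apply_X_pow_three_mul (U : R[X] →ₗ[R] R[X])
    (hsemi : ∀ f, U (X ^ 3 * (X + 1) * f) = X * (X + 1) ^ 3 * U f) (f : R[X]) :
    U (X ^ 3 * (X + 1) * f) + X ^ 3 * (X + 1) * f
      = X * (X + 1) ^ 3 * (U f + f) + (X ^ 2 + X) * f := by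
  rw [hsemi]
  grind

theorem add_self_apply_sq_mul_add (U : R[X] →ₗ[R] R[X])
    (hsemi : ∀ f, U (X ^ 3 * (X + 1) * f) = X * (X + 1) ^ 3 * U f) (f g : R[X]) :
    U ((X ^ 3 * (X + 1)) ^ 2 * f + g) + ((X ^ 3 * (X + 1)) ^ 2 * f + g)
      = (X * (X + 1) ^ 3) ^ 2 * (U f + f) + (X ^ 2 + X) ^ 2 * f + (U g + g) := by
  have hG := add_self_apply_X_pow_three_mul U hsemi
  have hGG := hG (X ^ 3 * (X + 1) * f)
  rw [hG f] at hGG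
  rw [map_add, sq, mul_assoc]
  grind

theorem X_sq_add_X_mul_X_pow_two_mul_add_four (n : ℕ) :
    (X ^ 2 + X : R[X]) * X ^ (2 * (n + 4))
      = (X ^ 3 * (X + 1)) ^ 2 * ((X ^ 2 + X) * X ^ (2 * n)) + (X ^ 2 + X) * X ^ (2 * (n + 3)) := by
  grind

end CharTwo

theorem stmt6 (U : Polynomial (ZMod 2) →ₗ[ZMod 2] Polynomial (ZMod 2))
    (hsemi : ∀ f, U (X ^ 3 * (X + 1) * f) = X * (X + 1) ^ 3 * U f)
    (h0 : U 1 = 1) (h1 : U X = X) (h2 : U (X ^ 2) = X ^ 2)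
    (h3 : U (X ^ 3) = X ^ 3 + X ^ 2 + X)
    (C : ℕ → Polynomial (ZMod 2))
    (hC0 : C 0 = 0) (hC1 : C 1 = 1) (hC2 : C 2 = X) (hC3 : C 3 = X ^ 2)
    (hrec : ∀ n, C (n + 4) = C (n + 3) + (X ^ 4 + X ^ 3 + X ^ 2 + X) * C n + X ^ n * (X ^ 2 + X)) :
    ∀ n : ℕ, U ((X ^ 2 + X) * X ^ (2 * n)) + (X ^ 2 + X) * X ^ (2 * n)
      = (X ^ 2 + X) * (C n).comp (X ^ 2) := by
  have hG := add_self_apply_X_pow_three_mul U hsemi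
  have hX4 : U (X ^ 4) = X ^ 4 := by
    have : (X ^ 4 : (ZMod 2)[X]) = X ^ 3 * (X + 1) * 1 + X ^ 3 := by grind
    rw [this, map_add, hsemi, h0, h3]
    grind
  refine congrFun (eq_of_four_step_recurrence (fun n x y => y + (X * (X + 1) ^ 3) ^ 2 * x
    + (X ^ 2 + X) ^ 2 * ((X ^ 2 + X) * X ^ (2 * n))) ?_ ?_ ?_ ?_ ?_ ?_)
  · intro n
    rw [X_sq_add_X_mul_X_pow_two_mul_add_four, add_self_apply_sq_mul_add U hsemi]
    ring
  · intro n
    simp only [hrec, add_comp, mul_comp, pow_comp, X_comp, ← pow_mul]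
    grind
  · simp only [mul_zero, pow_zero, mul_one, map_add, h1, h2, hC0, zero_comp]
    grind
  · have := hG 1
    simp only [h0, hC1, one_comp] at this ⊢
    grind
  · have := hG (X ^ 2)
    simp only [h2, hC2, X_comp] at this ⊢
    grind
  · have := hG (X ^ 4)
    simp only [hX4, hC3, pow_comp, X_comp] at this ⊢
    grind
end

section
/- Let C_n in Z/2[t] satisfy C_0 = 0, C_1 = 1, C_2 = t, C_3 = t^2, and C_{n+4} = C_{n+3} + (t^4 + t^3 + t^2 + t)·C_n + t^n·(t^2 + t). Then for n ≥ 1, the degree of C_n equals n - 1 if n is not divisible by 4, and is strictly less than n - 1 if n is divisible by 4. -/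
/-!
When `4 ∤ n` the product `(t⁴ + t³ + t² + t)·C_n` is monic of degree `n + 3` and dominates the
other two terms of the recurrence, so `C_n` is monic of degree `n - 1` whenever `4 ∤ n`. When
`4 ∣ n` that product has degree `< n + 3`, while `C_{n+3}` and `t^n·(t² + t)` are both monic of
degree `n + 2`; in characteristic two their sum is their difference, so the leading terms cancel
and the degree of `C_{n+4}` drops below `n + 3`.
-/

open Polynomial

namespace Polynomial

variable {R : Type*} [Ring R]

theorem IsMonicOfDegree.natDegree_add_lt [CharP R 2] {p q : R[X]} {n : ℕ} (hn : n ≠ 0)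
    (hp : IsMonicOfDegree p n) (hq : IsMonicOfDegree q n) : (p + q).natDegree < n := by
  simpa only [CharTwo.sub_eq_add] using hp.natDegree_sub_lt hn hq

variable [Nontrivial R]

theorem isMonicOfDegree_X_pow_mul_X_sq_add_X (n : ℕ) :
    IsMonicOfDegree ((X : R[X]) ^ n * (X ^ 2 + X)) (n + 2) :=
  (isMonicOfDegree_X_pow R n).mul <|
    (isMonicOfDegree_X_pow R 2).add_right (by rw [natDegree_X]; norm_num)

theorem isMonicOfDegree_X_pow_four_add : IsMonicOfDegree ((X : R[X]) ^ 4 + X ^ 3 + X ^ 2 + X) 4 :=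
  ⟨by compute_degree!, by monicity!⟩

end Polynomial

section Recurrence

variable {R : Type*} [Ring R] [Nontrivial R] {C : ℕ → R[X]}

theorem isMonicOfDegree_succ_four_of_isMonicOfDegree
    (hrec : ∀ n, C (n + 4) = C (n + 3) + (X ^ 4 + X ^ 3 + X ^ 2 + X) * C n + X ^ n * (X ^ 2 + X))
    {n : ℕ} (hn : 0 < n) (hCn : IsMonicOfDegree (C n) (n - 1))
    (hCn3 : (C (n + 3)).natDegree ≤ n + 2) : IsMonicOfDegree (C (n + 4)) (n + 3) := by
  have hmul : IsMonicOfDegree ((X ^ 4 + X ^ 3 + X ^ 2 + X) * C n) (n + 3) := by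
    convert isMonicOfDegree_X_pow_four_add.mul hCn using 1
    omega
  rw [hrec]
  exact (hmul.add_left (by omega)).add_right
    ((isMonicOfDegree_X_pow_mul_X_sq_add_X n).natDegree_eq.trans_lt (by omega))

theorem degree_succ_four_lt_of_degree_lt [CharP R 2]
    (hrec : ∀ n, C (n + 4) = C (n + 3) + (X ^ 4 + X ^ 3 + X ^ 2 + X) * C n + X ^ n * (X ^ 2 + X))
    {n : ℕ} (hCn : (C n).degree < ((n - 1 : ℕ) : WithBot ℕ))
    (hCn3 : IsMonicOfDegree (C (n + 3)) (n + 2)) :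
    (C (n + 4)).degree < ((n + 3 : ℕ) : WithBot ℕ) := by
  have hcancel : (C (n + 3) + X ^ n * (X ^ 2 + X)).degree < ((n + 3 : ℕ) : WithBot ℕ) := by
    refine degree_le_natDegree.trans_lt ?_
    exact_mod_cast
      (hCn3.natDegree_add_lt (by omega) (isMonicOfDegree_X_pow_mul_X_sq_add_X n)).trans
        (Nat.lt_succ_self _)
  have hmul : ((X ^ 4 + X ^ 3 + X ^ 2 + X) * C n).degree < ((n + 3 : ℕ) : WithBot ℕ) := by
    refine (degree_mul_le_of_le
      (degree_le_of_natDegree_le isMonicOfDegree_X_pow_four_add.natDegree_eq.le) le_rfl).trans_lt ?_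
    -- the bound `degree (C n) < n - 1` is only satisfiable by `⊥` when `n = 0`
    induction h : (C n).degree using WithBot.recBotCoe with
    | bot => exact WithBot.bot_lt_coe _
    | coe d =>
      rw [h] at hCn
      have hd : d < n - 1 := WithBot.coe_lt_coe.mp hCn
      exact WithBot.coe_lt_coe.mpr (by omega : 4 + d < n + 3)
  rw [hrec, add_right_comm]
  exact (degree_add_le _ _).trans_lt (max_lt hcancel hmul)

theorem isMonicOfDegree_of_not_dvd_and_degree_lt_of_dvd [CharP R 2]
    (hC0 : C 0 = 0) (hC1 : C 1 = 1) (hC2 : C 2 = X) (hC3 : C 3 = X ^ 2)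
    (hrec : ∀ n, C (n + 4) = C (n + 3) + (X ^ 4 + X ^ 3 + X ^ 2 + X) * C n + X ^ n * (X ^ 2 + X))
    (n : ℕ) :
    (¬ 4 ∣ n → IsMonicOfDegree (C n) (n - 1)) ∧
      (4 ∣ n → (C n).degree < ((n - 1 : ℕ) : WithBot ℕ)) := by
  induction n using Nat.strong_induction_on with
  | _ n ih =>
    match n with
    | 0 => exact ⟨fun h => absurd (dvd_zero 4) h, fun _ => by simp [hC0]⟩
    | 1 => exact ⟨fun _ => hC1 ▸ isMonicOfDegree_zero_iff.mpr rfl, fun h => absurd h (by omega)⟩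
    | 2 => exact ⟨fun _ => hC2 ▸ isMonicOfDegree_X R, fun h => absurd h (by omega)⟩
    | 3 => exact ⟨fun _ => hC3 ▸ isMonicOfDegree_X_pow R 2, fun h => absurd h (by omega)⟩
    | n + 4 =>
      obtain ⟨ihn, ihn'⟩ := ih n (by omega)
      obtain ⟨ihn3, ihn3'⟩ := ih (n + 3) (by omega)
      by_cases hn : 4 ∣ n
      · exact ⟨fun h => absurd (by omega) h,
          fun _ => degree_succ_four_lt_of_degree_lt hrec (ihn' hn) (ihn3 (by omega))⟩
      · have hCn3 : (C (n + 3)).natDegree ≤ n + 2 := by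
          by_cases h3 : 4 ∣ n + 3
          · exact natDegree_le_of_degree_le (ihn3' h3).le
          · exact (ihn3 h3).natDegree_eq.le
        exact ⟨fun _ => isMonicOfDegree_succ_four_of_isMonicOfDegree hrec (by omega) (ihn hn) hCn3,
          fun h => absurd (by omega) hn⟩

end Recurrence

theorem stmt7 (C : ℕ → Polynomial (ZMod 2))
    (hC0 : C 0 = 0) (hC1 : C 1 = 1) (hC2 : C 2 = X) (hC3 : C 3 = X ^ 2)
    (hrec : ∀ n, C (n + 4) = C (n + 3) + (X ^ 4 + X ^ 3 + X ^ 2 + X) * C n + X ^ n * (X ^ 2 + X)) :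
    ∀ n : ℕ, 1 ≤ n →
      (¬ (4 ∣ n) → (C n).degree = ((n - 1 : ℕ) : WithBot ℕ)) ∧
      (4 ∣ n → (C n).degree < ((n - 1 : ℕ) : WithBot ℕ)) := by
  intro n _
  obtain ⟨hmonic, hlt⟩ := isMonicOfDegree_of_not_dvd_and_degree_lt_of_dvd hC0 hC1 hC2 hC3 hrec n
  refine ⟨fun hn => ?_, hlt⟩
  rw [degree_eq_natDegree (hmonic hn).ne_zero, (hmonic hn).natDegree_eq]
end

section
/- With C_n as defined, if C_n is a Z/2-linear combination of the polynomials C_k with k < n, then 4 divides n. -/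
/-!
`C_n` has degree `< n` and the coefficient of `t ^ (n - 1)` in `C_n` is `1` unless `4 ∣ n`, since
the recurrence gives `coeff (C_{n+4}) (n+3) = coeff (C_n) (n-1)`. Every element of the span of the
`C_k` with `k < n` has degree `< n - 1`, so `C_n` lies outside that span when `4 ∤ n`.
-/

open Polynomial

noncomputable def cPoly (R : Type*) [Semiring R] : ℕ → R[X]
  | 0 => 0
  | 1 => 1
  | 2 => X
  | 3 => X ^ 2
  | n + 4 => cPoly R (n + 3) + (X ^ 4 + X ^ 3 + X ^ 2 + X) * cPoly R n + X ^ n * (X ^ 2 + X)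

namespace cPoly

variable {R : Type*} [Semiring R]

theorem eq_of_rec {C : ℕ → R[X]} (hC0 : C 0 = 0) (hC1 : C 1 = 1) (hC2 : C 2 = X)
    (hC3 : C 3 = X ^ 2)
    (hrec : ∀ n, C (n + 4) = C (n + 3) + (X ^ 4 + X ^ 3 + X ^ 2 + X) * C n + X ^ n * (X ^ 2 + X)) :
    ∀ n, C n = cPoly R n
  | 0 => hC0
  | 1 => hC1
  | 2 => hC2
  | 3 => hC3
  | n + 4 => by
    rw [hrec, cPoly, eq_of_rec hC0 hC1 hC2 hC3 hrec n, eq_of_rec hC0 hC1 hC2 hC3 hrec (n + 3)]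

theorem degree_lt : ∀ n, (cPoly R n).degree < n
  | 0 => by simp [cPoly]
  | 1 => by simpa [cPoly] using degree_C_lt (a := (1 : R))
  | 2 => by simpa [cPoly] using degree_X_le.trans_lt (by norm_num)
  | 3 => by simpa [cPoly] using (degree_X_pow_le 2).trans_lt (by norm_num)
  | n + 4 => by
    rw [cPoly, ← mem_degreeLT]
    refine add_mem (add_mem ?_ ?_) ?_
    · exact degreeLT_mono (by omega) (mem_degreeLT.2 (degree_lt (n + 3)))
    · rw [mem_degreeLT]
      calc _ ≤ (4 : WithBot ℕ) + (cPoly R n).degree :=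
            degree_mul_le_of_le (by compute_degree) le_rfl
        _ < ↑(n + 4) := by
            rw [add_comm, Nat.cast_add]
            exact WithBot.add_lt_add_right (by simp) (degree_lt n)
    · rw [mem_degreeLT]
      calc _ ≤ (n : WithBot ℕ) + 2 := degree_mul_le_of_le (degree_X_pow_le n) (by compute_degree)
        _ < ↑(n + 4) := by norm_cast; omega

theorem coeff_pred : ∀ n, (cPoly R (n + 1)).coeff n = if 4 ∣ n + 1 then 0 else 1
  | 0 => by simp [cPoly]
  | 1 => by simp [cPoly]
  | 2 => by simp [cPoly]
  | 3 => by simp [cPoly, coeff_X]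
  | n + 4 => by
    have vanish : ∀ m, n + 1 ≤ m → (cPoly R (n + 1)).coeff m = 0 := fun m hm =>
      coeff_eq_zero_of_degree_lt ((degree_lt _).trans_le (by exact_mod_cast hm))
    have hdiv : 4 ∣ n + 4 + 1 ↔ 4 ∣ n + 1 := by omega
    simp only [hdiv]
    rw [cPoly, ← coeff_pred n]
    simp [add_mul, coeff_X_pow_mul', coeff_X_mul, coeff_X_pow, coeff_X, vanish,
      coeff_eq_zero_of_degree_lt (degree_lt (n + 4))]

theorem notMem_span_image_Iio [Nontrivial R] {n : ℕ} (hn : ¬ 4 ∣ n) :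
    cPoly R n ∉ Submodule.span R (cPoly R '' Set.Iio n) := by
  obtain ⟨m, rfl⟩ : ∃ m, n = m + 1 := Nat.exists_eq_succ_of_ne_zero (by rintro rfl; simp at hn)
  have span_le : Submodule.span R (cPoly R '' Set.Iio (m + 1)) ≤ degreeLT R m := by
    rw [Submodule.span_le]
    rintro _ ⟨k, hk, rfl⟩
    exact mem_degreeLT.2 ((degree_lt k).trans_le (by exact_mod_cast Nat.lt_succ_iff.1 hk))
  intro hmem
  have := coeff_eq_zero_of_degree_lt (mem_degreeLT.1 (span_le hmem))
  simp [coeff_pred, hn] at this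

end cPoly

theorem stmt8 (C : ℕ → Polynomial (ZMod 2))
    (hC0 : C 0 = 0) (hC1 : C 1 = 1) (hC2 : C 2 = X) (hC3 : C 3 = X ^ 2)
    (hrec : ∀ n, C (n + 4) = C (n + 3) + (X ^ 4 + X ^ 3 + X ^ 2 + X) * C n + X ^ n * (X ^ 2 + X)) :
    ∀ n : ℕ, C n ∈ Submodule.span (ZMod 2) (C '' Set.Iio n) → 4 ∣ n := by
  obtain rfl : C = cPoly (ZMod 2) := funext (cPoly.eq_of_rec hC0 hC1 hC2 hC3 hrec)
  intro n hmem
  by_contra hn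
  exact cPoly.notMem_span_image_Iio hn hmem
end

section
/- With U, F, G as defined, U takes 1, F, F^2, F^3 to 1, G, G^2, G^3 + F respectively. -/
/-!
Put `s = X (X + 1)`. Over `ZMod 2` we have `F = G + s` and `F + s = G`. Expanding
`F ^ n = (G + s) ^ n` binomially and using `U (G ^ k * f) = F ^ k * U f` gives
`U (F ^ n) = (F + s) ^ n = G ^ n` as long as `U` fixes `1, s, ..., s ^ n`, which is the case for
`n ≤ 2`. For `n = 3` the only defect is `U (s ^ 3) - s ^ 3`; since `s ^ 3 = G (X + 1) ^ 2`, it equals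
`(F - G) (X + 1) ^ 2 = s (X + 1) ^ 2 = F`.
-/

open Polynomial

noncomputable def Fp : Polynomial (ZMod 2) := X * (X + 1) ^ 3

noncomputable def Gp : Polynomial (ZMod 2) := X ^ 3 * (X + 1)

namespace LinearMap

variable {R A : Type*} [Semiring R] [CommRing A] [Module R A] (U : A →ₗ[R] A) {g φ : A}

theorem map_pow_mul_of_map_mul (hU : ∀ f, U (g * f) = φ * U f) (k : ℕ) (f : A) :
    U (g ^ k * f) = φ ^ k * U f := by
  induction k generalizing f with
  | zero => simp
  | succ k ih => rw [pow_succ', mul_assoc, hU, ih, ← mul_assoc, ← pow_succ']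

theorem map_add_pow_of_map_mul (hU : ∀ f, U (g * f) = φ * U f) {s : A} {n : ℕ}
    (hs : ∀ j < n, U (s ^ j) = s ^ j) :
    U ((g + s) ^ n) = (φ + s) ^ n - s ^ n + U (s ^ n) := by
  have expand : U ((g + s) ^ n) - (φ + s) ^ n =
      ∑ m ∈ Finset.range (n + 1), φ ^ m * (U (s ^ (n - m)) - s ^ (n - m)) * n.choose m := by
    simp only [add_pow, map_sum, ← Finset.sum_sub_distrib]
    refine Finset.sum_congr rfl fun m _ => ?_
    rw [mul_assoc, ← nsmul_eq_mul', mul_smul_comm, map_nsmul, map_pow_mul_of_map_mul U hU,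
      nsmul_eq_mul]
    ring
  rw [Finset.sum_eq_single 0 (fun m hm hm0 => by
      rw [hs _ (by rw [Finset.mem_range] at hm; omega), sub_self, mul_zero, zero_mul]) (by simp)] at expand
  simp only [pow_zero, one_mul, Nat.sub_zero, Nat.choose_zero_right, Nat.cast_one, mul_one] at expand
  linear_combination expand

end LinearMap

theorem Fp_eq_Gp_add : Fp = Gp + X * (X + 1) := by
  grind [Fp, Gp]

theorem Fp_add_eq_Gp : Fp + X * (X + 1) = Gp := by
  grind [Fp, Gp]

theorem X_mul_X_add_one_sq : (X * (X + 1)) ^ 2 = Gp * 1 + X ^ 3 + X ^ 2 := by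
  grind [Gp]

theorem Fp_add_eq_X_mul_X_add_one_sq :
    Fp * 1 + (X ^ 3 + X ^ 2 + X) + X ^ 2 = (X * (X + 1)) ^ 2 := by
  grind [Fp]

theorem X_mul_X_add_one_cube : (X * (X + 1)) ^ 3 = Gp * (X ^ 2 + 1) := by
  grind [Gp]

theorem Fp_mul_X_sq_add_one : Fp * (X ^ 2 + 1) = (X * (X + 1)) ^ 3 + Fp := by
  grind [Fp]

theorem stmt10 (U : Polynomial (ZMod 2) →ₗ[ZMod 2] Polynomial (ZMod 2))
    (hsemi : ∀ f, U (Gp * f) = Fp * U f)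
    (h0 : U 1 = 1) (h1 : U X = X) (h2 : U (X ^ 2) = X ^ 2)
    (h3 : U (X ^ 3) = X ^ 3 + X ^ 2 + X) :
    U 1 = 1 ∧ U Fp = Gp ∧ U (Fp ^ 2) = Gp ^ 2 ∧ U (Fp ^ 3) = Gp ^ 3 + Fp := by
  have hs1 : U (X * (X + 1)) = X * (X + 1) := by
    rw [mul_add_one, ← sq, map_add, h1, h2]
  have hs2 : U ((X * (X + 1)) ^ 2) = (X * (X + 1)) ^ 2 := by
    conv_lhs => rw [X_mul_X_add_one_sq, map_add, map_add, hsemi, h0, h2, h3]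
    exact Fp_add_eq_X_mul_X_add_one_sq
  have hs3 : U ((X * (X + 1)) ^ 3) = Fp * (X ^ 2 + 1) := by
    rw [X_mul_X_add_one_cube, hsemi, map_add, h2, h0]
  have hs : ∀ j < 3, U ((X * (X + 1)) ^ j) = (X * (X + 1)) ^ j := by
    intro j hj
    interval_cases j <;> simp only [pow_zero, pow_one, h0, hs1, hs2]
  have hpow : ∀ n ≤ 3, U (Fp ^ n) = Gp ^ n - (X * (X + 1)) ^ n + U ((X * (X + 1)) ^ n) := by
    intro n hn
    rw [Fp_eq_Gp_add, U.map_add_pow_of_map_mul hsemi fun j hj => hs j (by omega), Fp_add_eq_Gp]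
  refine ⟨h0, ?_, ?_, ?_⟩
  · simpa only [pow_one, hs1, sub_add_cancel] using hpow 1 (by norm_num)
  · rw [hpow 2 (by norm_num), hs2, sub_add_cancel]
  · rw [hpow 3 le_rfl, hs3, Fp_mul_X_sq_add_one]
    ring
end

section
/- Let P_n = U(F^n). Then P_{n+4} + F^4·P_n + F·P_{n+1} = 0 for all n ≥ 0. The same recurrence holds with P_n = G^n. -/
/-!
Since `Fp ^ 4 = Gp ^ 4 + Fp * Gp`, multiplying by `Fp ^ n` writes `Fp ^ (n + 4)` as
`Gp ^ 4 * Fp ^ n + Gp * Fp ^ (n + 1)`; the rule `U (Gp * f) = Fp * U f` turns every factor `Gp`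
into an outer factor `Fp`, which gives the recurrence for `U (Fp ^ n)`. Multiplying the relation by
`Gp ^ n` instead gives the one for `Gp ^ n`. In characteristic 2 both become sums equal to zero.
-/

open Polynomial

section Recurrence

variable {R : Type*} [CommRing R] {a b : R}

theorem map_pow_mul_of_map_mul {F : Type*} [FunLike F R R] (U : F)
    (hU : ∀ f, U (b * f) = a * U f) (k : ℕ) (f : R) : U (b ^ k * f) = a ^ k * U f := by
  induction k with
  | zero => simp
  | succ k ih => rw [pow_succ', mul_assoc, hU, ih, pow_succ', mul_assoc]

theorem left_pow_add_four_of_pow_four_eq (hab : a ^ 4 = b ^ 4 + a * b) (n : ℕ) :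
    a ^ (n + 4) = b ^ 4 * a ^ n + b * a ^ (n + 1) := by
  linear_combination a ^ n * hab

theorem right_pow_add_four_of_pow_four_eq (hab : a ^ 4 = b ^ 4 + a * b) (n : ℕ) :
    b ^ (n + 4) = a ^ 4 * b ^ n - a * b ^ (n + 1) := by
  linear_combination -b ^ n * hab

theorem map_pow_add_four_of_pow_four_eq {F : Type*} [FunLike F R R] [AddHomClass F R R] (U : F)
    (hU : ∀ f, U (b * f) = a * U f) (hab : a ^ 4 = b ^ 4 + a * b) (n : ℕ) :
    U (a ^ (n + 4)) = a ^ 4 * U (a ^ n) + a * U (a ^ (n + 1)) := by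
  rw [left_pow_add_four_of_pow_four_eq hab, map_add, map_pow_mul_of_map_mul U hU, hU]

end Recurrence

theorem add_add_eq_zero_of_eq_add {R : Type*} [Semiring R] [CharP R 2] {x y z : R}
    (h : x = y + z) : x + y + z = 0 := by
  rw [h, add_assoc, CharTwo.add_self_eq_zero]

theorem Fp_pow_four : Fp ^ 4 = Gp ^ 4 + Fp * Gp := by
  unfold Fp Gp
  ring_nf
  reduce_mod_char

theorem stmt11_general (U : Polynomial (ZMod 2) →ₗ[ZMod 2] Polynomial (ZMod 2))
    (hsemi : ∀ f, U (Gp * f) = Fp * U f) :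
    ∀ n : ℕ,
      U (Fp ^ (n + 4)) + Fp ^ 4 * U (Fp ^ n) + Fp * U (Fp ^ (n + 1)) = 0 ∧
      Gp ^ (n + 4) + Fp ^ 4 * Gp ^ n + Fp * Gp ^ (n + 1) = 0 := by
  intro n
  refine ⟨add_add_eq_zero_of_eq_add ?_, add_add_eq_zero_of_eq_add ?_⟩
  · exact map_pow_add_four_of_pow_four_eq U hsemi Fp_pow_four n
  · rw [right_pow_add_four_of_pow_four_eq Fp_pow_four, CharTwo.sub_eq_add]

theorem stmt11 (U : Polynomial (ZMod 2) →ₗ[ZMod 2] Polynomial (ZMod 2))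
    (hsemi : ∀ f, U (Gp * f) = Fp * U f)
    (h0 : U 1 = 1) (h1 : U X = X) (h2 : U (X ^ 2) = X ^ 2)
    (h3 : U (X ^ 3) = X ^ 3 + X ^ 2 + X) :
    ∀ n : ℕ,
      U (Fp ^ (n + 4)) + Fp ^ 4 * U (Fp ^ n) + Fp * U (Fp ^ (n + 1)) = 0 ∧
      Gp ^ (n + 4) + Fp ^ 4 * Gp ^ n + Fp * Gp ^ (n + 1) = 0 :=
  stmt11_general U hsemi
end

section
/- The three elements u_0 = G, u_1 = F, u_2 = (F+G)^2·G of Z/2[r] are linearly independent over the subring Z/2[G], and each u_i equals (r^2 + r)·g_i(r^2) for some polynomial g_i of degree at most 3 (namely g_0 = t, g_1 = t + 1, g_2 = t^3 + t^2). -/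
/-!
Let ν be the order of vanishing at r = 0 (`natTrailingDegree`). Since G(0) = 0 and ν(G) = 3, every
nonzero a(G) has ν(a(G)) = 3 ν(a), a multiple of 3. As F + G = r² + r, the three elements are
r³(r+1), r(r+1)³ and r⁵(r+1)³, of orders 3, 1, 5, pairwise distinct mod 3. Hence in a relation
a₀(G) u₀ + a₁(G) u₁ + a₂(G) u₂ = 0 the nonzero terms have pairwise distinct orders, and the
coefficient at the least of them cannot cancel.
-/

open Polynomial

namespace Polynomial

section Semiring

variable {R : Type*} [Semiring R]

theorem eq_zero_of_sum_eq_zero_of_injOn_natTrailingDegree {ι : Type*} {s : Finset ι}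
    {f : ι → R[X]} (hf : Set.InjOn (fun i ↦ (f i).natTrailingDegree) {i | i ∈ s ∧ f i ≠ 0})
    (hsum : ∑ i ∈ s, f i = 0) : ∀ i ∈ s, f i = 0 := by
  classical
  by_contra! hne
  obtain ⟨i, hi, hmin⟩ := (s.filter (f · ≠ 0)).exists_min_image (fun i ↦ (f i).natTrailingDegree)
    (by simpa [Finset.filter_nonempty_iff] using hne)
  rw [Finset.mem_filter] at hi
  have hcoeff : (∑ j ∈ s, f j).coeff (f i).natTrailingDegree = (f i).trailingCoeff := by
    rw [finsetSum_coeff]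
    refine Finset.sum_eq_single_of_mem i hi.1 fun j hj hji ↦ ?_
    by_cases hfj : f j = 0
    · rw [hfj, coeff_zero]
    have hle := hmin j (Finset.mem_filter.mpr ⟨hj, hfj⟩)
    exact coeff_eq_zero_of_lt_natTrailingDegree <|
      hle.lt_of_ne fun h ↦ hji (hf ⟨hj, hfj⟩ hi h.symm)
  rw [hsum, coeff_zero, eq_comm, trailingCoeff_eq_zero] at hcoeff
  exact hi.2 hcoeff

theorem natTrailingDegree_pow [NoZeroDivisors R] (p : R[X]) (n : ℕ) :
    (p ^ n).natTrailingDegree = n * p.natTrailingDegree := by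
  rcases eq_or_ne p 0 with rfl | hp
  · rcases n with _ | n <;> simp
  induction n with
  | zero => simp
  | succ n ih => rw [pow_succ, natTrailingDegree_mul (pow_ne_zero n hp) hp, ih, Nat.succ_mul]

theorem natTrailingDegree_X_pow_mul_X_add_one_pow [NoZeroDivisors R] [Nontrivial R]
    (m n : ℕ) : ((X : R[X]) ^ m * (X + 1) ^ n).natTrailingDegree = m := by
  have hX1 : (X + 1 : R[X]) ≠ 0 := X_add_C_ne_zero 1
  rw [natTrailingDegree_mul (pow_ne_zero _ X_ne_zero) (pow_ne_zero _ hX1), natTrailingDegree_X_pow,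
    natTrailingDegree_pow, natTrailingDegree_eq_zero.mpr (Or.inr (by simp)), mul_zero, add_zero]

end Semiring

section CommRing

variable {R : Type*} [CommRing R] [NoZeroDivisors R]

theorem natTrailingDegree_comp {p q : R[X]} (hq : q.coeff 0 = 0) :
    (p.comp q).natTrailingDegree = p.natTrailingDegree * q.natTrailingDegree := by
  rcases eq_or_ne q 0 with rfl | hq0
  · simp
  rcases eq_or_ne p 0 with rfl | hp
  · simp
  obtain ⟨p', hpp', hX⟩ := exists_eq_pow_rootMultiplicity_mul_and_not_dvd p hp 0
  rw [map_zero, sub_zero, rootMultiplicity_eq_natTrailingDegree'] at hpp'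
  rw [map_zero, sub_zero, X_dvd_iff] at hX
  have hcomp : (p'.comp q).coeff 0 ≠ 0 := by
    rwa [coeff_zero_eq_eval_zero, eval_comp, ← coeff_zero_eq_eval_zero, hq,
      ← coeff_zero_eq_eval_zero]
  have hcomp0 : p'.comp q ≠ 0 := fun h ↦ hcomp (by rw [h, coeff_zero])
  conv_lhs => rw [hpp', mul_comp, X_pow_comp]
  rw [natTrailingDegree_mul (pow_ne_zero _ hq0) hcomp0,
    natTrailingDegree_pow, natTrailingDegree_eq_zero.mpr (Or.inr hcomp), add_zero]

theorem natTrailingDegree_dvd_of_mem_adjoin {q x : R[X]} (hq : q.coeff 0 = 0)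
    (hx : x ∈ Algebra.adjoin R {q}) : q.natTrailingDegree ∣ x.natTrailingDegree := by
  rw [Algebra.adjoin_singleton_eq_range_aeval, AlgHom.mem_range] at hx
  obtain ⟨p, rfl⟩ := hx
  rw [← comp_eq_aeval, natTrailingDegree_comp hq]
  exact dvd_mul_left _ _

theorem linearIndependent_adjoin_of_injective_natTrailingDegree_mod {q : R[X]}
    (hq : q.coeff 0 = 0) {ι : Type*} {v : ι → R[X]} (hv : ∀ i, v i ≠ 0)
    (hinj : Function.Injective fun i ↦ (v i).natTrailingDegree % q.natTrailingDegree) :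
    LinearIndependent (Algebra.adjoin R {q}) v := by
  rw [linearIndependent_iff']
  intro s g hsum i hi
  simp only [Subalgebra.smul_def, smul_eq_mul] at hsum
  have hmod : ∀ j, (g j : R[X]) * v j ≠ 0 →
      ((g j : R[X]) * v j).natTrailingDegree % q.natTrailingDegree =
        (v j).natTrailingDegree % q.natTrailingDegree := by
    intro j hj
    obtain ⟨k, hk⟩ := natTrailingDegree_dvd_of_mem_adjoin hq (g j).2
    rw [natTrailingDegree_mul (left_ne_zero_of_mul hj) (hv j), hk, Nat.mul_add_mod]
  have hzero := eq_zero_of_sum_eq_zero_of_injOn_natTrailingDegree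
    (fun j hj k hk hjk ↦ hinj <| by
      simp only at hjk ⊢
      rw [← hmod j hj.2, ← hmod k hk.2, hjk]) hsum i hi
  exact Subtype.ext ((mul_eq_zero.mp hzero).resolve_right (hv i))

end CommRing

end Polynomial

lemma Fp_add_Gp : Fp + Gp = X ^ 2 + X := by
  unfold Fp Gp; ring_nf; reduce_mod_char

lemma vector_eq_X_pow_mul_X_add_one_pow :
    ![Gp, Fp, (Fp + Gp) ^ 2 * Gp] = fun i ↦ X ^ ![3, 1, 5] i * (X + 1) ^ ![1, 3, 3] i := by
  ext1 i
  fin_cases i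
  · simp [Gp]
  · simp [Fp]
  · show (Fp + Gp) ^ 2 * Gp = X ^ 5 * (X + 1) ^ 3
    rw [Fp_add_Gp, Gp]; ring

theorem stmt13 :
    LinearIndependent (Algebra.adjoin (ZMod 2) {Gp}) ![Gp, Fp, (Fp + Gp) ^ 2 * Gp] ∧
    Gp = (X ^ 2 + X) * (X : Polynomial (ZMod 2)).comp (X ^ 2) ∧
    Fp = (X ^ 2 + X) * (X + 1 : Polynomial (ZMod 2)).comp (X ^ 2) ∧
    (Fp + Gp) ^ 2 * Gp = (X ^ 2 + X) * (X ^ 3 + X ^ 2 : Polynomial (ZMod 2)).comp (X ^ 2) ∧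
    (∀ i : Fin 3, ∃ g : Polynomial (ZMod 2), g.degree ≤ 3 ∧
      ![Gp, Fp, (Fp + Gp) ^ 2 * Gp] i = (X ^ 2 + X) * g.comp (X ^ 2)) := by
  have hG : Gp = (X ^ 2 + X) * (X : Polynomial (ZMod 2)).comp (X ^ 2) := by
    rw [X_comp, Gp]; ring
  have hF : Fp = (X ^ 2 + X) * (X + 1 : Polynomial (ZMod 2)).comp (X ^ 2) := by
    rw [add_comp, X_comp, one_comp, Fp]; ring_nf; reduce_mod_char
  have hH : (Fp + Gp) ^ 2 * Gp =
      (X ^ 2 + X) * (X ^ 3 + X ^ 2 : Polynomial (ZMod 2)).comp (X ^ 2) := by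
    rw [Fp_add_Gp, Gp, add_comp, pow_comp, pow_comp, X_comp]; ring_nf; reduce_mod_char
  refine ⟨?_, hG, hF, hH, fun i ↦ ?_⟩
  · have hGcoeff : Gp.coeff 0 = 0 := by simp [Gp]
    have hGdeg : Gp.natTrailingDegree = 3 := by
      rw [Gp, ← pow_one (X + 1 : (ZMod 2)[X]), natTrailingDegree_X_pow_mul_X_add_one_pow]
    rw [vector_eq_X_pow_mul_X_add_one_pow]
    refine linearIndependent_adjoin_of_injective_natTrailingDegree_mod hGcoeff
      (fun i ↦ mul_ne_zero (pow_ne_zero _ X_ne_zero) (pow_ne_zero _ (X_add_C_ne_zero 1))) ?_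
    simp only [natTrailingDegree_X_pow_mul_X_add_one_pow, hGdeg]
    decide
  · fin_cases i
    exacts [⟨X, by compute_degree!, hG⟩, ⟨X + 1, by compute_degree!, hF⟩,
      ⟨X ^ 3 + X ^ 2, by compute_degree!, hH⟩]
end

section
/- For 0 ≤ i ≤ 2 and k ≥ 0, (U^2 + I)(F^i·G^k) = F^i·T(F^k), where T(f) = U(f) + α(f) on Z/2[F] and α(F^n) = G^n. -/
/-!
Since `U (Gp * f) = Fp * U f`, the map `U` turns a factor `Gp ^ k` into `Fp ^ k`. Writing
`Fp = Gp + (X ^ 2 + X)` and `Fp ^ 2 = Gp * (Gp + 1) + (X ^ 3 + X ^ 2)` and using the values of `U`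
on `1, X, X ^ 2, X ^ 3` gives `U (Fp ^ i) = Gp ^ i` for `i ≤ 2`. Hence `U (Fp ^ i * Gp ^ k) = Fp ^ k * Gp ^ i` and,
applying `U` once more, `U (U (Fp ^ i * Gp ^ k)) = Fp ^ i * U (Fp ^ k)`.
-/

open Polynomial

section Semilinear

variable {R : Type*} [CommMonoid R] {U : R → R} {g p : R}

theorem apply_pow_mul_of_apply_mul (hU : ∀ f, U (g * f) = p * U f) (k : ℕ) (f : R) :
    U (g ^ k * f) = p ^ k * U f := by
  induction k generalizing f with
  | zero => simp
  | succ k ih => rw [pow_succ', mul_assoc, hU, ih, pow_succ', mul_assoc]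

theorem apply_apply_pow_mul_pow_of_apply_mul (hU : ∀ f, U (g * f) = p * U f) {i : ℕ}
    (hi : U (p ^ i) = g ^ i) (k : ℕ) : U (U (p ^ i * g ^ k)) = p ^ i * U (p ^ k) := by
  rw [mul_comm, apply_pow_mul_of_apply_mul hU, hi, mul_comm, apply_pow_mul_of_apply_mul hU]

end Semilinear

-- Stated with `Gp * 1` so that the hypothesis `U (Gp * f) = Fp * U f` rewrites it directly.
theorem Fp_eq : Fp = Gp * 1 + (X ^ 2 + X) := by
  unfold Fp Gp; ring_nf; reduce_mod_char

theorem Fp_sq_eq : Fp ^ 2 = Gp * (Gp + 1) + (X ^ 3 + X ^ 2) := by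
  unfold Fp Gp; ring_nf; reduce_mod_char

section Values

variable {U : Polynomial (ZMod 2) →ₗ[ZMod 2] Polynomial (ZMod 2)}
    (hsemi : ∀ f, U (Gp * f) = Fp * U f) (h0 : U 1 = 1)
include hsemi h0

theorem apply_Fp (h1 : U X = X) (h2 : U (X ^ 2) = X ^ 2) : U Fp = Gp := by
  rw [Fp_eq, map_add, hsemi, h0, map_add, h1, h2]
  unfold Fp Gp; ring_nf; reduce_mod_char

theorem apply_Fp_sq (h2 : U (X ^ 2) = X ^ 2) (h3 : U (X ^ 3) = X ^ 3 + X ^ 2 + X) :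
    U (Fp ^ 2) = Gp ^ 2 := by
  have hUG : U Gp = Fp := by simpa [h0] using hsemi 1
  rw [Fp_sq_eq, map_add, hsemi, map_add, hUG, h0, map_add, h3, h2]
  unfold Fp Gp; ring_nf; reduce_mod_char

theorem apply_Fp_pow (h1 : U X = X) (h2 : U (X ^ 2) = X ^ 2) (h3 : U (X ^ 3) = X ^ 3 + X ^ 2 + X)
    {i : ℕ} (hi : i ≤ 2) : U (Fp ^ i) = Gp ^ i := by
  interval_cases i
  · simpa using h0
  · simpa using apply_Fp hsemi h0 h1 h2
  · exact apply_Fp_sq hsemi h0 h2 h3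

end Values

theorem stmt14 (U : Polynomial (ZMod 2) →ₗ[ZMod 2] Polynomial (ZMod 2))
    (hsemi : ∀ f, U (Gp * f) = Fp * U f)
    (h0 : U 1 = 1) (h1 : U X = X) (h2 : U (X ^ 2) = X ^ 2)
    (h3 : U (X ^ 3) = X ^ 3 + X ^ 2 + X) :
    ∀ i : ℕ, i ≤ 2 → ∀ k : ℕ,
      U (U (Fp ^ i * Gp ^ k)) + Fp ^ i * Gp ^ k = Fp ^ i * (U (Fp ^ k) + Gp ^ k) := by
  intro i hi k
  rw [apply_apply_pow_mul_pow_of_apply_mul hsemi (apply_Fp_pow hsemi h0 h1 h2 h3 hi), mul_add]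
end

section
/- Let M(odd) be the set of all elements of Z/2[r] of the form (r^2 + r)·g(r^2) with g ∈ Z/2[t]. Then U maps M(odd) into M(odd). -/
/-!
`U` commutes with squaring. In characteristic 2 the polynomials `h` with `U (h ^ 2) = (U h) ^ 2`
form a submodule, which `U (G * f) = F * U f` makes stable under multiplication by
`G = X ^ 3 * (X + 1)`. Since `X ^ (m + 4) = G * X ^ m + X ^ (m + 3)`, it contains every power of `X`
once it contains `1, X, X ^ 2, X ^ 3`, and that is what the four prescribed values of `U` give.
Over `ZMod 2` we have `g (X ^ 2) = g ^ 2`, and writing `h = h(0) + X * k`,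
`(X ^ 2 + X) * h ^ 2 = h(0) ^ 2 * (X ^ 2 + X) + G * k ^ 2` is mapped by `U` to
`(X ^ 2 + X) * (h(0) + (X + 1) * U k) ^ 2`.
-/

open Polynomial

section CharTwo

variable {R : Type*} [CommRing R] [CharP R 2]

theorem X_pow_add_four_eq (m : ℕ) :
    (X : R[X]) ^ (m + 4) = X ^ 3 * (X + 1) * X ^ m + X ^ (m + 3) := by
  linear_combination (-(X : R[X]) ^ (m + 3)) * CharTwo.two_eq_zero (R := R[X])

def sqCommuting (U : R[X] →ₗ[R] R[X]) : Submodule R R[X] where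
  carrier := {h | U (h ^ 2) = U h ^ 2}
  add_mem' {a b} (ha : U (a ^ 2) = U a ^ 2) (hb : U (b ^ 2) = U b ^ 2) := by
    show U ((a + b) ^ 2) = U (a + b) ^ 2
    rw [CharTwo.add_sq, map_add, map_add, ha, hb, CharTwo.add_sq]
  zero_mem' := by simp
  smul_mem' c h (hh : U (h ^ 2) = U h ^ 2) := by
    show U ((c • h) ^ 2) = U (c • h) ^ 2
    rw [_root_.smul_pow, map_smul, hh, map_smul, _root_.smul_pow]

variable {U : R[X] →ₗ[R] R[X]} {G F : R[X]}

theorem mem_sqCommuting {h : R[X]} : h ∈ sqCommuting U ↔ U (h ^ 2) = U h ^ 2 := Iff.rfl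

theorem map_X_pow_add_four (hsemi : ∀ f, U (X ^ 3 * (X + 1) * f) = F * U f) (m : ℕ) :
    U (X ^ (m + 4)) = F * U (X ^ m) + U (X ^ (m + 3)) := by
  rw [X_pow_add_four_eq, map_add, hsemi]

theorem mul_mem_sqCommuting (hsemi : ∀ f, U (G * f) = F * U f) {h : R[X]}
    (hh : h ∈ sqCommuting U) : G * h ∈ sqCommuting U := by
  rw [mem_sqCommuting] at hh ⊢
  rw [show (G * h) ^ 2 = G * (G * h ^ 2) by ring, hsemi, hsemi, hh, hsemi]
  ring

theorem sqCommuting_eq_top (hsemi : ∀ f, U (X ^ 3 * (X + 1) * f) = F * U f)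
    (hlow : ∀ i < 4, (X : R[X]) ^ i ∈ sqCommuting U) : sqCommuting U = ⊤ := by
  have hX : ∀ n, (X : R[X]) ^ n ∈ sqCommuting U := by
    intro n
    induction n using Nat.strong_induction_on with
    | _ n ih =>
      rcases lt_or_ge n 4 with hn | hn
      · exact hlow n hn
      · obtain ⟨m, rfl⟩ := Nat.exists_eq_add_of_le' hn
        rw [X_pow_add_four_eq]
        exact add_mem (mul_mem_sqCommuting hsemi (ih m (by omega))) (ih (m + 3) (by omega))
  refine Submodule.eq_top_iff'.2 fun h ↦ ?_
  induction h using Polynomial.induction_on' with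
  | add p q hp hq => exact add_mem hp hq
  | monomial n a =>
    rw [← smul_X_eq_monomial]
    exact Submodule.smul_mem _ a (hX n)

theorem exists_map_mul_sq (hsemi : ∀ f, U (X ^ 3 * (X + 1) * f) = X * (X + 1) ^ 3 * U f)
    (h1 : U X = X) (h2 : U (X ^ 2) = X ^ 2) (hsq : ∀ h, U (h ^ 2) = U h ^ 2) (h : R[X]) :
    ∃ g, U ((X ^ 2 + X) * h ^ 2) = (X ^ 2 + X) * g ^ 2 := by
  obtain ⟨k, hk⟩ := X_dvd_sub_C (p := h)
  set a := h.coeff 0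
  have hsplit : (X ^ 2 + X) * h ^ 2 = a ^ 2 • (X ^ 2 + X) + X ^ 3 * (X + 1) * k ^ 2 := by
    rw [show h = C a + X * k by rw [← hk]; ring, CharTwo.add_sq, smul_eq_C_mul, C_pow]
    ring
  refine ⟨C a + (X + 1) * U k, ?_⟩
  rw [hsplit, map_add, map_smul, hsemi, hsq, map_add, h1, h2, CharTwo.add_sq, smul_eq_C_mul, C_pow]
  ring

end CharTwo

theorem X_pow_mem_sqCommuting {U : (ZMod 2)[X] →ₗ[ZMod 2] (ZMod 2)[X]}
    (hsemi : ∀ f, U (X ^ 3 * (X + 1) * f) = X * (X + 1) ^ 3 * U f)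
    (h0 : U 1 = 1) (h1 : U X = X) (h2 : U (X ^ 2) = X ^ 2) (h3 : U (X ^ 3) = X ^ 3 + X ^ 2 + X) :
    ∀ i < 4, (X : (ZMod 2)[X]) ^ i ∈ sqCommuting U := by
  have h4 : U (X ^ 4) = X ^ 4 := by
    rw [map_X_pow_add_four hsemi 0, pow_zero, h0, zero_add, h3]
    ring_nf
    reduce_mod_char
  have h6 : U (X ^ 6) = (X ^ 3 + X ^ 2 + X) ^ 2 := by
    rw [map_X_pow_add_four hsemi 2, map_X_pow_add_four hsemi 1]
    simp only [Nat.reduceAdd, pow_one, h1, h2, h4]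
    ring_nf
    reduce_mod_char
  intro i hi
  rw [mem_sqCommuting]
  interval_cases i <;> simp only [← pow_mul, one_pow, pow_zero, pow_one, *]

theorem stmt17 (U : Polynomial (ZMod 2) →ₗ[ZMod 2] Polynomial (ZMod 2))
    (hsemi : ∀ f, U (X ^ 3 * (X + 1) * f) = X * (X + 1) ^ 3 * U f)
    (h0 : U 1 = 1) (h1 : U X = X) (h2 : U (X ^ 2) = X ^ 2)
    (h3 : U (X ^ 3) = X ^ 3 + X ^ 2 + X) :
    ∀ g : Polynomial (ZMod 2), ∃ g' : Polynomial (ZMod 2),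
      U ((X ^ 2 + X) * g.comp (X ^ 2)) = (X ^ 2 + X) * g'.comp (X ^ 2) := by
  have hsq (h) : U (h ^ 2) = U h ^ 2 := mem_sqCommuting.1 <|
    Submodule.eq_top_iff'.1 (sqCommuting_eq_top hsemi (X_pow_mem_sqCommuting hsemi h0 h1 h2 h3)) h
  intro g
  obtain ⟨g', hg'⟩ := exists_map_mul_sq hsemi h1 h2 hsq g
  refine ⟨g', ?_⟩
  simpa only [← expand_eq_comp_X_pow, ZMod.expand_card] using hg'
end

section
/- Let K be the kernel of U + I acting on M(odd) = {(r^2+r)·g(r^2) : g ∈ Z/2[t]}. Then K is contained in the free Z/2[G^2]-module N2 with basis {G, F, F^2·G}. -/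
/-!
Over `Z/2[G²]`, the odd part `M(odd)` is free on `G, F, F²G, G·X⁴`: this comes from the basis
`1, y, y², y³` of `Z/2[y]` over `Z/2[y⁴ + y³]`, with `y = X²` and `y⁴ + y³ = G²`.
Both `U` and the involution `σ : X ↦ X + 1` are semilinear along `G² ↦ F²`. They agree on
`G, F, F²G`, because `σ` swaps `F` and `G`, and `U (G·X⁴) = σ (G·X⁴) + F`. So writing
`f = n + t(G²)·G·X⁴` with `n ∈ N2` gives `U f = σ f + t(F²)·F`. If `U f = f`, applying `σ` yields
`t(F²)·F = t(G²)·G`. The two sides have `X`-adic orders `1 + 2m` and `3 + 6m`, where `m` is the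
order of `t`, so `t = 0`.
-/

open Polynomial

theorem Polynomial.map_comp_mul_of_map_mul {R : Type*} [CommSemiring R] (U : R[X] →ₗ[R] R[X])
    {A B : R[X]} (hU : ∀ k, U (A * k) = B * U k) (p k : R[X]) :
    U (p.comp A * k) = p.comp B * U k := by
  induction p using Polynomial.induction_on generalizing k with
  | C r => simp only [C_comp, ← smul_eq_C_mul, map_smul]
  | add p q hp hq => simp only [add_comp, add_mul, map_add, hp, hq]
  | monomial n r ih =>
    simp only [mul_comp, pow_succ, C_comp, pow_comp, X_comp] at ih ⊢
    rw [show C r * (A ^ n * A) * k = C r * A ^ n * (A * k) by ring, ih, hU]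
    ring

theorem Polynomial.exists_eq_comp_X_pow_four_add_X_pow_three {R : Type*} [CommRing R]
    (g : R[X]) : ∃ a b c d : R[X], g = a.comp (X ^ 4 + X ^ 3) + b.comp (X ^ 4 + X ^ 3) * X +
      c.comp (X ^ 4 + X ^ 3) * X ^ 2 + d.comp (X ^ 4 + X ^ 3) * X ^ 3 := by
  induction g using Polynomial.induction_on with
  | C r => exact ⟨C r, 0, 0, 0, by simp⟩
  | add p q hp hq =>
    obtain ⟨a, b, c, d, rfl⟩ := hp
    obtain ⟨a', b', c', d', rfl⟩ := hq
    exact ⟨a + a', b + b', c + c', d + d', by simp only [add_comp]; ring⟩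
  | monomial n r ih =>
    obtain ⟨a, b, c, d, hg⟩ := ih
    refine ⟨d * X, a, b, c - d, ?_⟩
    rw [pow_succ, ← mul_assoc, hg]
    simp only [mul_comp, sub_comp, X_comp]
    ring

theorem Polynomial.comp_X_add_one_comp_X_add_one {R : Type*} [CommRing R] [CharP R 2]
    (f : R[X]) : (f.comp (X + 1)).comp (X + 1) = f := by
  rw [comp_assoc, add_comp, X_comp, one_comp, add_assoc, CharTwo.add_self_eq_zero, add_zero,
    comp_X]

theorem Gp_comp_X_add_one : Gp.comp (X + 1) = Fp := by
  simp only [Gp, Fp, mul_comp, pow_comp, X_comp, add_comp, one_comp]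
  ring_nf; reduce_mod_char

theorem Fp_comp_X_add_one : Fp.comp (X + 1) = Gp := by
  rw [← Gp_comp_X_add_one, comp_X_add_one_comp_X_add_one]

theorem comp_Gp_sq_comp_X_add_one (p : (ZMod 2)[X]) :
    (p.comp (Gp ^ 2)).comp (X + 1) = p.comp (Fp ^ 2) := by
  rw [comp_assoc, pow_comp, Gp_comp_X_add_one]

theorem comp_Fp_sq_comp_X_add_one (p : (ZMod 2)[X]) :
    (p.comp (Fp ^ 2)).comp (X + 1) = p.comp (Gp ^ 2) := by
  rw [comp_assoc, pow_comp, Fp_comp_X_add_one]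

theorem eq_zero_of_comp_Fp_sq_mul_Fp_eq {t : (ZMod 2)[X]}
    (h : t.comp (Fp ^ 2) * Fp = t.comp (Gp ^ 2) * Gp) : t = 0 := by
  by_contra ht
  obtain ⟨u, hu, hXu⟩ := exists_eq_pow_rootMultiplicity_mul_and_not_dvd t ht 0
  set m := t.rootMultiplicity 0
  rw [C_0, sub_zero] at hu hXu
  have hu0 : (u.comp (Fp ^ 2)).eval 0 = u.eval 0 := by simp [eval_comp, Fp]
  rw [hu] at h
  simp only [mul_comp, pow_comp, X_comp] at h
  generalize u.comp (Fp ^ 2) = a at h hu0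
  generalize u.comp (Gp ^ 2) = b at h
  simp only [Fp, Gp, mul_pow, ← pow_mul] at h
  have hcancel : (X + 1) ^ (6 * m + 3) * a = X ^ (4 * m + 2) * (X + 1) ^ (2 * m + 1) * b := by
    apply mul_left_cancel₀ (pow_ne_zero (2 * m + 1) (X_ne_zero (R := ZMod 2)))
    linear_combination h
  have heval := congrArg (eval 0) hcancel
  simp [hu0] at heval
  exact hXu (X_dvd_iff.mpr (by simpa [coeff_zero_eq_eval_zero] using heval))

def MemN2 (f : (ZMod 2)[X]) : Prop :=
  ∃ p q s : (ZMod 2)[X],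
    f = p.comp (Gp ^ 2) * Gp + q.comp (Gp ^ 2) * Fp + s.comp (Gp ^ 2) * (Fp ^ 2 * Gp)

theorem exists_memN2_add_of_odd (g : (ZMod 2)[X]) : ∃ n t : (ZMod 2)[X],
    MemN2 n ∧ (X ^ 2 + X) * g.comp (X ^ 2) = n + t.comp (Gp ^ 2) * (Gp * X ^ 4) := by
  obtain ⟨a, b, c, d, hg⟩ := exists_eq_comp_X_pow_four_add_X_pow_three g
  have hw : (X ^ 4 + X ^ 3 : (ZMod 2)[X]).comp (X ^ 2) = Gp ^ 2 := by
    simp only [Gp, add_comp, pow_comp, X_comp]; ring_nf; reduce_mod_char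
  refine ⟨_, c + d, ⟨a + b + c * X, a, c, rfl⟩, ?_⟩
  rw [hg]
  simp only [add_comp, mul_comp, comp_assoc, hw, pow_comp, X_comp]
  generalize a.comp (Gp ^ 2) = a'
  generalize b.comp (Gp ^ 2) = b'
  generalize c.comp (Gp ^ 2) = c'
  generalize d.comp (Gp ^ 2) = d'
  simp only [Fp, Gp]
  ring_nf; reduce_mod_char

structure IsUOperator (U : (ZMod 2)[X] →ₗ[ZMod 2] (ZMod 2)[X]) : Prop where
  map_Gp_mul : ∀ f, U (Gp * f) = Fp * U f
  map_one : U 1 = 1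
  map_X : U X = X
  map_X_sq : U (X ^ 2) = X ^ 2
  map_X_pow_three : U (X ^ 3) = X ^ 3 + X ^ 2 + X

namespace IsUOperator

variable {U : (ZMod 2)[X] →ₗ[ZMod 2] (ZMod 2)[X]}

theorem map_comp_Gp_sq_mul (hU : IsUOperator U) (p k : (ZMod 2)[X]) :
    U (p.comp (Gp ^ 2) * k) = p.comp (Fp ^ 2) * U k :=
  map_comp_mul_of_map_mul U (fun k => by rw [sq, sq, mul_assoc, hU.map_Gp_mul, hU.map_Gp_mul,
    mul_assoc]) p k

theorem map_Gp (hU : IsUOperator U) : U Gp = Fp := by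
  simpa [hU.map_one] using hU.map_Gp_mul 1

theorem map_Fp (hU : IsUOperator U) : U Fp = Gp := by
  have hF : Fp = Gp + X ^ 2 + X := by simp only [Fp, Gp]; ring_nf; reduce_mod_char
  rw [hF, map_add, map_add, hU.map_Gp, hU.map_X_sq, hU.map_X, hF]
  ring_nf; reduce_mod_char

theorem map_X_pow_four (hU : IsUOperator U) : U (X ^ 4) = Fp + X ^ 3 + X ^ 2 + X := by
  have h4 : (X ^ 4 : (ZMod 2)[X]) = Gp * 1 + X ^ 3 := by simp only [Gp]; ring_nf; reduce_mod_char
  rw [h4, map_add, hU.map_Gp_mul, hU.map_one, hU.map_X_pow_three]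
  ring

theorem map_Fp_sq_mul_Gp (hU : IsUOperator U) : U (Fp ^ 2 * Gp) = Gp ^ 2 * Fp := by
  have hF2 : Fp ^ 2 = Gp * Gp + X ^ 4 + X ^ 2 := by simp only [Fp, Gp]; ring_nf; reduce_mod_char
  rw [mul_comm, hU.map_Gp_mul, hF2, map_add, map_add, hU.map_Gp_mul, hU.map_Gp, hU.map_X_pow_four,
    hU.map_X_sq]
  simp only [Fp, Gp]; ring_nf; reduce_mod_char

theorem map_Gp_mul_X_pow_four (hU : IsUOperator U) :
    U (Gp * X ^ 4) = (Gp * X ^ 4).comp (X + 1) + Fp := by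
  rw [hU.map_Gp_mul, hU.map_X_pow_four, mul_comp, Gp_comp_X_add_one, pow_comp, X_comp]
  simp only [Fp]; ring_nf; reduce_mod_char

theorem map_eq_comp_of_memN2 (hU : IsUOperator U) {n : (ZMod 2)[X]} (hn : MemN2 n) :
    U n = n.comp (X + 1) := by
  obtain ⟨p, q, s, rfl⟩ := hn
  simp only [map_add, hU.map_comp_Gp_sq_mul, hU.map_Gp, hU.map_Fp, hU.map_Fp_sq_mul_Gp, add_comp,
    mul_comp, comp_Gp_sq_comp_X_add_one, Gp_comp_X_add_one, Fp_comp_X_add_one, pow_comp]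

theorem map_memN2_add_eq (hU : IsUOperator U) {n : (ZMod 2)[X]} (hn : MemN2 n) (t : (ZMod 2)[X]) :
    U (n + t.comp (Gp ^ 2) * (Gp * X ^ 4)) =
      (n + t.comp (Gp ^ 2) * (Gp * X ^ 4)).comp (X + 1) + t.comp (Fp ^ 2) * Fp := by
  rw [map_add, hU.map_comp_Gp_sq_mul, hU.map_eq_comp_of_memN2 hn, hU.map_Gp_mul_X_pow_four,
    add_comp, mul_comp (t.comp _), comp_Gp_sq_comp_X_add_one]
  ring

end IsUOperator

theorem eq_zero_of_eq_comp_X_add_one_add {f t : (ZMod 2)[X]}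
    (h : f = f.comp (X + 1) + t.comp (Fp ^ 2) * Fp) : t = 0 := by
  have hσ := congrArg (·.comp (X + 1)) h
  simp only [add_comp, mul_comp, comp_X_add_one_comp_X_add_one, comp_Fp_sq_comp_X_add_one,
    Fp_comp_X_add_one] at hσ
  refine eq_zero_of_comp_Fp_sq_mul_Fp_eq ?_
  rw [← CharTwo.add_eq_zero]
  linear_combination -h - hσ

theorem stmt18 (U : Polynomial (ZMod 2) →ₗ[ZMod 2] Polynomial (ZMod 2))
    (hsemi : ∀ f, U (X ^ 3 * (X + 1) * f) = X * (X + 1) ^ 3 * U f)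
    (h0 : U 1 = 1) (h1 : U X = X) (h2 : U (X ^ 2) = X ^ 2)
    (h3 : U (X ^ 3) = X ^ 3 + X ^ 2 + X) :
    ∀ f : Polynomial (ZMod 2),
      (∃ g : Polynomial (ZMod 2), f = (X ^ 2 + X) * g.comp (X ^ 2)) →
      U f + f = 0 →
      ∃ p q s : Polynomial (ZMod 2),
        f = p.comp (Gp ^ 2) * Gp + q.comp (Gp ^ 2) * Fp + s.comp (Gp ^ 2) * (Fp ^ 2 * Gp) := by
  have hU : IsUOperator U := ⟨hsemi, h0, h1, h2, h3⟩
  rintro f ⟨g, rfl⟩ hker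
  obtain ⟨n, t, hn, hf⟩ := exists_memN2_add_of_odd g
  rw [hf, CharTwo.add_eq_zero, hU.map_memN2_add_eq hn] at hker
  rw [hf, eq_zero_of_eq_comp_X_add_one_add hker.symm, zero_comp, zero_mul, add_zero]
  exact hn
end
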